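/- Let 0 < R < 1/4 and set s₁ := (1 − 2R − √(1 − 4R))/2 and s₂ := (1 − 2R + √(1 − 4R))/2 (the two roots of s² + (2R−1)s + R² = 0). Then s₂ > 1/4 and −1/4 < s₁ < 1/4. Moreover, let 0 < w < R, and define N₁(r,s) := −(s/2)·sin r + (R + s·cos(r/2))·cos r·sin(r/2) + (1/2)·(R + s·cos(r/2))²·cos(r/2)·sin r and N₂(r,s) := (s/2)·cos r + (R + s·cos(r/2))·sin r·sin(r/2) − (1/2)·(R + s·cos(r/2))²·cos(r/2)·cos r. If (r,s) ∈ [0, 2π) × [−w, w] satisfies N₁(r,s) = 0 and N₂(r,s) = 0, then necessarily R < 1/4, r = 0, and s = s₁. In particular the Möbius strip of radius R > 0 and width w < R has at most one characteristic point, occurring only when 0 < R < 1/4. -/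
import Mathlib


/-- The `X`-component of the Heisenberg normal vector of the Möbius strip
`γ(r,s) = ((R + s·cos(r/2))·cos r, (R + s·cos(r/2))·sin r, s·sin(r/2))` in `ℍ¹ ≅ ℝ³`. -/
noncomputable def N1 (R r s : ℝ) : ℝ :=
  -(s/2) * Real.sin r + (R + s * Real.cos (r/2)) * Real.cos r * Real.sin (r/2)
    + (1/2) * (R + s * Real.cos (r/2))^2 * Real.cos (r/2) * Real.sin r

/-- The `Y`-component of the Heisenberg normal vector of the Möbius strip. -/
noncomputable def N2 (R r s : ℝ) : ℝ :=
  (s/2) * Real.cos r + (R + s * Real.cos (r/2)) * Real.sin r * Real.sin (r/2)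
    - (1/2) * (R + s * Real.cos (r/2))^2 * Real.cos (r/2) * Real.cos r

/-- Let `0 < R < 1/4` and let `s₁ := (1 − 2R − √(1 − 4R))/2`, `s₂ := (1 − 2R + √(1 − 4R))/2`
be the two roots of `s² + (2R−1)s + R² = 0`. Then `s₂ > 1/4` and `−1/4 < s₁ < 1/4`;
moreover, for `0 < w < R`, if `(r,s) ∈ [0, 2π) × [−w, w]` satisfies
`N₁(r,s) = 0` and `N₂(r,s) = 0`, then necessarily `R < 1/4`, `r = 0` and `s = s₁`.
In particular the Möbius strip of radius `R` and width `w < R` has at most one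
characteristic point, occurring only when `0 < R < 1/4`. -/
theorem mobius_characteristic_point (R w s₁ s₂ : ℝ)
    (hR0 : 0 < R) (hR : R < 1/4)
    (hs₁ : s₁ = (1 - 2*R - Real.sqrt (1 - 4*R))/2)
    (hs₂ : s₂ = (1 - 2*R + Real.sqrt (1 - 4*R))/2)
    (hw0 : 0 < w) (hwR : w < R) :
    s₂ > 1/4 ∧ (-(1/4) < s₁ ∧ s₁ < 1/4)
    ∧ ∀ r s : ℝ, 0 ≤ r → r < 2*Real.pi → -w ≤ s → s ≤ w →
        N1 R r s = 0 → N2 R r s = 0 → R < 1/4 ∧ r = 0 ∧ s = s₁ := by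
  set t := Real.sqrt (1 - 4*R) with hts
  have ht2 : t^2 = 1 - 4*R := Real.sq_sqrt (by linarith)
  have ht0 : 0 < t := Real.sqrt_pos.mpr (by linarith)
  have ht1 : t < 1 := by nlinarith
  refine ⟨by rw [hs₂]; nlinarith, ⟨by rw [hs₁]; nlinarith, by rw [hs₁]; nlinarith⟩, ?_⟩
  intro r s hr0 hr2 hsw hsw' hN1 hN2
  simp only [N1, N2] at hN1 hN2
  have hpy := Real.sin_sq_add_cos_sq r
  set ρ := R + s * Real.cos (r/2) with hρ
  have key1 : ρ * Real.sin (r/2) = 0 := by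
    linear_combination Real.sin r * hN2 + Real.cos r * hN1
      - ρ * Real.sin (r/2) * hpy
  have key2 : s = ρ^2 * Real.cos (r/2) := by
    linear_combination 2 * Real.cos r * hN2 - 2 * Real.sin r * hN1
      - (s - ρ^2 * Real.cos (r/2)) * hpy
  have hc1 := Real.neg_one_le_cos (r/2)
  have hc2 := Real.cos_le_one (r/2)
  have hρne : ρ ≠ 0 := by
    intro h
    rw [hρ] at h
    nlinarith [mul_nonneg (by linarith : (0:ℝ) ≤ w + s) (by linarith : (0:ℝ) ≤ 1 + Real.cos (r/2)),
      mul_nonneg (by linarith : (0:ℝ) ≤ w - s) (by linarith : (0:ℝ) ≤ 1 - Real.cos (r/2))]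
  have hsin : Real.sin (r/2) = 0 := by
    rcases mul_eq_zero.mp key1 with h | h
    · exact absurd h hρne
    · exact h
  have hpi : (0:ℝ) < Real.pi := Real.pi_pos
  have hr : r = 0 := by
    have := (Real.sin_eq_zero_iff_of_lt_of_lt (by linarith : -Real.pi < r/2)
      (by linarith : r/2 < Real.pi)).mp hsin
    linarith
  refine ⟨hR, hr, ?_⟩
  subst hr
  rw [hρ] at key2
  norm_num [Real.cos_zero] at key2
  -- key2 : s = (R + s)^2
  have hroot : (s - s₁) * (s - s₂) = 0 := by
    rw [hs₁, hs₂]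
    linear_combination -key2 - ((1:ℝ)/4) * ht2
  rcases mul_eq_zero.mp hroot with h | h
  · linarith
  · exfalso
    have hs2big : s₂ > 1/4 := by rw [hs₂]; nlinarith
    linarith
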